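/- Let A₊ ∈ Oₙ⁺ and A₋ ∈ Oₙ⁻. Then ‖A₊ − A₋‖ = 2 (Frobenius norm) if and only if there exists a unit vector v ∈ ℝⁿ such that A₊ = A₋(I − 2 v vᵀ). -/
import Mathlib

open Matrix

attribute [local instance] Matrix.frobeniusNormedAddCommGroup Matrix.frobeniusNormedSpace

lemma frob_sq {n : ℕ} (X : Matrix (Fin n) (Fin n) ℝ) :
    ‖X‖ ^ 2 = Matrix.trace (X * Xᵀ) := by
  have hS : (0:ℝ) ≤ ∑ i, ∑ j, ‖X i j‖ ^ (2:ℝ) := by positivity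
  rw [Matrix.frobenius_norm_def]
  rw [← Real.rpow_natCast ((∑ i, ∑ j, ‖X i j‖ ^ (2:ℝ)) ^ (1/2:ℝ)) 2, ← Real.rpow_mul hS]
  norm_num
  unfold Matrix.trace
  simp [Matrix.mul_apply, Matrix.diag, Real.rpow_two, Real.norm_eq_abs, sq_abs, sq]

lemma trace_mul_vmv {n : ℕ} (Q : Matrix (Fin n) (Fin n) ℝ) (v w : Fin n → ℝ) :
    Matrix.trace (Q * vecMulVec v w) = w ⬝ᵥ Q.mulVec v := by
  simp only [Matrix.trace, Matrix.diag, Matrix.mul_apply, vecMulVec_apply,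
    dotProduct, Matrix.mulVec, Finset.mul_sum]
  exact Finset.sum_congr rfl fun i _ => Finset.sum_congr rfl fun j _ => by ring

lemma vmv_mul_vmv {n : ℕ} (v : Fin n → ℝ) (h : v ⬝ᵥ v = 1) :
    vecMulVec v v * vecMulVec v v = vecMulVec v v := by
  ext i j
  simp only [Matrix.mul_apply, vecMulVec_apply]
  calc ∑ k, v i * v k * (v k * v j) = (∑ k, v k * v k) * (v i * v j) := by
        rw [Finset.sum_mul]; exact Finset.sum_congr rfl fun k _ => by ring
    _ = v i * v j := by rw [show (∑ k, v k * v k) = 1 from h, one_mul]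

lemma trace_vmv {n : ℕ} (v : Fin n → ℝ) : Matrix.trace (vecMulVec v v) = v ⬝ᵥ v := by
  simp [Matrix.trace, Matrix.diag, vecMulVec_apply, dotProduct]

lemma dot_self_of_norm_one {n : ℕ} (v : EuclideanSpace ℝ (Fin n)) (hv : ‖v‖ = 1) :
    (v : Fin n → ℝ) ⬝ᵥ (v : Fin n → ℝ) = 1 := by
  have h := EuclideanSpace.norm_eq v
  rw [hv] at h
  have hnn : (0:ℝ) ≤ ∑ i, ‖v i‖^2 := by positivity
  have h2 : ∑ i, ‖v i‖^2 = 1 := by nlinarith [Real.sq_sqrt hnn]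
  simpa [dotProduct, Real.norm_eq_abs, sq_abs, sq] using h2

lemma expand_sub_one {n : ℕ} (R : Matrix (Fin n) (Fin n) ℝ) :
    (R - 1) * (R - 1)ᵀ = R * Rᵀ - R - Rᵀ + 1 := by
  rw [Matrix.transpose_sub, Matrix.transpose_one]
  noncomm_ring

theorem stmt4 {n : ℕ} (Aplus Aminus : Matrix (Fin n) (Fin n) ℝ)
    (hAp : Aplus * Aplusᵀ = 1) (hApdet : Aplus.det = 1)
    (hAm : Aminus * Aminusᵀ = 1) (hAmdet : Aminus.det = -1) :
    ‖Aplus - Aminus‖ = 2 ↔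
      ∃ v : EuclideanSpace ℝ (Fin n), ‖v‖ = 1 ∧
        Aplus = Aminus * (1 - (2 : ℝ) • Matrix.vecMulVec (v : Fin n → ℝ) (v : Fin n → ℝ)) := by
  have hAm' : Aminusᵀ * Aminus = 1 := mul_eq_one_comm.mp hAm
  set Q := Aminusᵀ * Aplus with hQdef
  have hQA : Aminus * Q = Aplus := by rw [hQdef, ← Matrix.mul_assoc, hAm, Matrix.one_mul]
  have hQQt : Q * Qᵀ = 1 := by
    rw [hQdef, Matrix.transpose_mul, Matrix.transpose_transpose,
      Matrix.mul_assoc, ← Matrix.mul_assoc Aplus, hAp, Matrix.one_mul, hAm']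
  have key : ‖Aplus - Aminus‖ ^ 2 = 2 * n - 2 * Matrix.trace Q := by
    rw [frob_sq]
    have expand : (Aplus - Aminus) * (Aplus - Aminus)ᵀ
        = (1 + 1) - Aplus * Aminusᵀ - Aminus * Aplusᵀ := by
      rw [Matrix.transpose_sub, Matrix.sub_mul, Matrix.mul_sub, Matrix.mul_sub, hAp, hAm]
      noncomm_ring
    have h1 : Matrix.trace (Aplus * Aminusᵀ) = Matrix.trace Q := by
      rw [hQdef, Matrix.trace_mul_comm]
    have h2 : Matrix.trace (Aminus * Aplusᵀ) = Matrix.trace Q := by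
      rw [Matrix.trace_mul_comm, ← Matrix.trace_transpose Q, hQdef, Matrix.transpose_mul,
        Matrix.transpose_transpose]
    rw [expand, Matrix.trace_sub, Matrix.trace_sub, Matrix.trace_add, Matrix.trace_one, h1, h2]
    simp
    ring
  have hiff : ‖Aplus - Aminus‖ = 2 ↔ Matrix.trace Q = (n:ℝ) - 2 := by
    constructor
    · intro h; rw [h] at key; norm_num at key; linarith
    · intro h
      rw [h] at key
      have h4 : ‖Aplus - Aminus‖ ^ 2 = 4 := by rw [key]; ring
      nlinarith [norm_nonneg (Aplus - Aminus)]
  rw [hiff]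
  constructor
  · intro htr
    have hQdet : Q.det = -1 := by
      rw [hQdef, Matrix.det_mul, Matrix.det_transpose, hAmdet, hApdet]; ring
    have hdet0 : (1 + Q).det = 0 := by
      have h1 : 1 + Q = Q * (1 + Qᵀ) := by
        rw [Matrix.mul_add, Matrix.mul_one, hQQt]; exact (add_comm _ _)
      have h3 : (1 + Qᵀ) = (1 + Q)ᵀ := by rw [Matrix.transpose_add, Matrix.transpose_one]
      have h2 := congrArg Matrix.det h1
      rw [Matrix.det_mul, h3, Matrix.det_transpose] at h2
      rw [hQdet] at h2; linarith
    obtain ⟨w, hw0, hww⟩ := Matrix.exists_mulVec_eq_zero_iff.mpr hdet0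
    have hQw : Q.mulVec w = -w := by
      rw [Matrix.add_mulVec, Matrix.one_mulVec] at hww
      exact eq_neg_of_add_eq_zero_right hww
    set u : EuclideanSpace ℝ (Fin n) := (WithLp.equiv 2 _).symm w with hu
    have hu0 : u ≠ 0 := by
      simpa [hu] using hw0
    refine ⟨‖u‖⁻¹ • u, norm_smul_inv_norm hu0, ?_⟩
    set v : Fin n → ℝ := ((‖u‖⁻¹ • u : EuclideanSpace ℝ (Fin n)) : Fin n → ℝ) with hv
    have hvd : v ⬝ᵥ v = 1 := dot_self_of_norm_one _ (norm_smul_inv_norm hu0)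
    have hQv : Q.mulVec v = -v := by
      have hvw : v = ‖u‖⁻¹ • w := rfl
      rw [hvw, Matrix.mulVec_smul, hQw, smul_neg]
    set P := vecMulVec v v with hP
    set H := (1 : Matrix (Fin n) (Fin n) ℝ) - (2:ℝ) • P with hH
    have hPt : Pᵀ = P := by
      ext i j; simp [hP, vecMulVec_apply, mul_comm]
    have hHt : Hᵀ = H := by
      rw [hH, Matrix.transpose_sub, Matrix.transpose_smul, Matrix.transpose_one, hPt]
    have hPP : P * P = P := vmv_mul_vmv v hvd
    have hHH : H * H = 1 := by
      rw [hH]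
      simp only [Matrix.sub_mul, Matrix.mul_sub, Matrix.one_mul, Matrix.mul_one,
        Matrix.smul_mul, Matrix.mul_smul, smul_smul, hPP]
      module
    have htrP : Matrix.trace P = 1 := by rw [hP, trace_vmv, hvd]
    have htrQP : Matrix.trace (Q * P) = -1 := by
      rw [hP, trace_mul_vmv, hQv, dotProduct_neg, hvd]
    have htrQH : Matrix.trace (Q * H) = (n:ℝ) := by
      rw [hH, Matrix.mul_sub, Matrix.mul_one, Matrix.mul_smul, Matrix.trace_sub,
        Matrix.trace_smul, htrQP, htr]
      simp
    have hRRt : (Q * H) * (Q * H)ᵀ = 1 := by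
      rw [Matrix.transpose_mul, hHt, ← Matrix.mul_assoc, Matrix.mul_assoc Q H H, hHH,
        Matrix.mul_one, hQQt]
    have hnorm0 : ‖Q * H - 1‖ ^ 2 = 0 := by
      rw [frob_sq, expand_sub_one, hRRt, Matrix.trace_add, Matrix.trace_sub, Matrix.trace_sub,
        Matrix.trace_one, Matrix.trace_transpose, htrQH]
      simp
    have hQH1 : Q * H = 1 := by
      have : Q * H - 1 = 0 := by
        have := (pow_eq_zero_iff (two_ne_zero)).mp hnorm0
        exact norm_eq_zero.mp this
      linear_combination (norm := noncomm_ring) this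
    have hQH : Q = H := by
      have h5 : Q * (H * H) = H := by rw [← Matrix.mul_assoc, hQH1, Matrix.one_mul]
      rw [hHH, Matrix.mul_one] at h5
      exact h5
    rw [← hQA, hQH]
  · rintro ⟨v, hv1, hEq⟩
    have hvd : (v : Fin n → ℝ) ⬝ᵥ (v : Fin n → ℝ) = 1 := dot_self_of_norm_one v hv1
    have hQH : Q = 1 - (2:ℝ) • vecMulVec (v : Fin n → ℝ) (v : Fin n → ℝ) := by
      rw [hQdef, hEq, ← Matrix.mul_assoc, hAm', Matrix.one_mul]
    rw [hQH, Matrix.trace_sub, Matrix.trace_smul, Matrix.trace_one, trace_vmv, hvd]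
    simp
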